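/- arXiv:2112.04205 — 2 statements merged into one kernel-verified Lean document; each statement's English description precedes it below -/
import Mathlib

section
/- Let Γ be an M-metrised graph and let f : M → N be an injective homomorphism of sharp integral commutative monoids. Then the edge contraction Γ' of Γ along f has the same underlying graph as Γ (no edges are contracted), Prin(Γ) = Prin(Γ') under the identification of vertex sets, and r(f_*(D)) = r(D) for every divisor D ∈ Div(Γ). -/
noncomputable section
open scoped Classical

/-! ### Groupification of a cancellative additive commutative monoid -/

variable (M : Type) [AddCancelCommMonoid M]

def gpSetoid : Setoid (M × M) where
  r p q := p.1 + q.2 = q.1 + p.2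
  iseqv := by
    refine ⟨fun p => rfl, fun h => h.symm, fun {p q r} h1 h2 => ?_⟩
    have key : (p.1 + r.2) + (q.1 + q.2) = (r.1 + p.2) + (q.1 + q.2) := by
      calc (p.1 + r.2) + (q.1 + q.2) = (p.1 + q.2) + (q.1 + r.2) := by abel
        _ = (q.1 + p.2) + (r.1 + q.2) := by rw [h1, h2]
        _ = (r.1 + p.2) + (q.1 + q.2) := by abel
    exact add_right_cancel key

/-- The groupification `M^gp` of a cancellative commutative monoid `M`:
the quotient of `M × M` by `(a,b) ~ (c,d) ↔ a + d = c + b` (think of `(a,b)` as `a - b`). -/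
def Gp : Type := Quotient (gpSetoid M)

namespace Gp

variable {M}

/-- The element `a - b` of `M^gp`. -/
def mk (a b : M) : Gp M := Quotient.mk (gpSetoid M) (a, b)

instance : Zero (Gp M) := ⟨mk 0 0⟩

instance : Add (Gp M) :=
  ⟨Quotient.map₂ (fun p q => (p.1 + q.1, p.2 + q.2)) (by
    intro p p' hp q q' hq
    show (p.1 + q.1) + (p'.2 + q'.2) = (p'.1 + q'.1) + (p.2 + q.2)
    calc (p.1 + q.1) + (p'.2 + q'.2) = (p.1 + p'.2) + (q.1 + q'.2) := by abel
      _ = (p'.1 + p.2) + (q'.1 + q.2) := by rw [hp, hq]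
      _ = (p'.1 + q'.1) + (p.2 + q.2) := by abel)⟩

instance : Neg (Gp M) :=
  ⟨Quotient.map (fun p => (p.2, p.1)) (by
    intro p p' hp
    show p.2 + p'.1 = p'.2 + p.1
    calc p.2 + p'.1 = p'.1 + p.2 := by abel
      _ = p.1 + p'.2 := hp.symm
      _ = p'.2 + p.1 := by abel)⟩

lemma mk_add_mk (a b c d : M) : mk a b + mk c d = mk (a + c) (b + d) := rfl
lemma neg_mk (a b : M) : -(mk a b) = mk b a := rfl
lemma zero_def : (0 : Gp M) = mk 0 0 := rfl

instance : AddCommGroup (Gp M) where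
  add := (· + ·)
  zero := 0
  neg := Neg.neg
  nsmul := nsmulRec
  zsmul := zsmulRec
  add_assoc := by
    intro a b c
    induction a using Quotient.inductionOn with | h a =>
    induction b using Quotient.inductionOn with | h b =>
    induction c using Quotient.inductionOn with | h c =>
    exact Quotient.sound (by
      show ((a.1 + b.1) + c.1) + (a.2 + (b.2 + c.2)) = (a.1 + (b.1 + c.1)) + ((a.2 + b.2) + c.2)
      abel)
  zero_add := by
    intro a
    induction a using Quotient.inductionOn with | h a =>
    exact Quotient.sound (by
      show (0 + a.1) + a.2 = a.1 + (0 + a.2)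
      abel)
  add_zero := by
    intro a
    induction a using Quotient.inductionOn with | h a =>
    exact Quotient.sound (by
      show (a.1 + 0) + a.2 = a.1 + (a.2 + 0)
      abel)
  neg_add_cancel := by
    intro a
    induction a using Quotient.inductionOn with | h a =>
    exact Quotient.sound (by
      show (a.2 + a.1) + 0 = 0 + (a.1 + a.2)
      abel)
  add_comm := by
    intro a b
    induction a using Quotient.inductionOn with | h a =>
    induction b using Quotient.inductionOn with | h b =>
    exact Quotient.sound (by
      show (a.1 + b.1) + (b.2 + a.2) = (b.1 + a.1) + (a.2 + b.2)
      abel)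

/-- The canonical map `M → M^gp`. -/
def of : M →+ Gp M where
  toFun a := mk a 0
  map_zero' := rfl
  map_add' := by
    intro a b
    exact (Quotient.sound (by
      show (a + b) + (0 + 0) = (a + b) + 0
      abel) : mk (a + b) 0 = mk (a + b) (0 + 0))

/-- Functoriality of groupification: a monoid homomorphism `f : M →+ N` induces
`f^gp : M^gp →+ N^gp`. -/
def map {N : Type} [AddCancelCommMonoid N] (f : M →+ N) : Gp M →+ Gp N where
  toFun := Quotient.map (fun p => (f p.1, f p.2)) (by
    intro p p' hp
    show f p.1 + f p'.2 = f p'.1 + f p.2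
    rw [← f.map_add, ← f.map_add, hp])
  map_zero' := by
    show mk (f 0) (f 0) = mk 0 0
    rw [f.map_zero]
  map_add' := by
    intro a b
    induction a using Quotient.inductionOn with | h a =>
    induction b using Quotient.inductionOn with | h b =>
    show mk (f (a.1 + b.1)) (f (a.2 + b.2)) = mk (f a.1 + f b.1) (f a.2 + f b.2)
    rw [f.map_add, f.map_add]

end Gp

/-- Sharpness: the only invertible element of `M` is `0`. -/
def Sharp : Prop := ∀ a b : M, a + b = 0 → a = 0

/-! ### Monoid-metrised graphs -/

/-- A graph (Definition 2.3 of the paper) together with a metric taking values in the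
monoid `M`: `X` is the finite set of vertices and half-edges, `r` sends an element to its
root vertex, `i` is the pairing involution on half-edges, and `l` assigns a length in `M`
to every half-edge (and `0` to every vertex). -/
structure MGraph where
  X : Type
  [finX : Fintype X]
  r : X → X
  i : X → X
  r_idem : ∀ x, r (r x) = r x
  i_invol : ∀ x, i (i x) = x
  fix_iff : ∀ x, i x = x ↔ r x = x
  l : X → M
  l_i : ∀ x, l (i x) = l x
  l_zero_iff : ∀ x, l x = 0 ↔ i x = x

attribute [instance] MGraph.finX

namespace MGraph

variable {M} (G : MGraph M)

/-- `x` is a vertex iff it is fixed by the involution. -/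
def IsVertex (x : G.X) : Prop := G.i x = x

/-- `x` is a half-edge iff it is not fixed by the involution. -/
def IsHalfEdge (x : G.X) : Prop := G.i x ≠ x

/-- The vertex set of `G`. -/
abbrev V : Type := { x : G.X // G.IsVertex x }

/-- The root of any element of `X` is a vertex. -/
def rv (x : G.X) : G.V := ⟨G.r x, (G.fix_iff (G.r x)).mpr (G.r_idem x)⟩

/-- Two vertices are adjacent if some edge joins them. -/
def Adj (u v : G.V) : Prop := ∃ x, G.IsHalfEdge x ∧ G.rv x = u ∧ G.rv (G.i x) = v

/-- `G` is connected. (All graphs in the paper are assumed connected.) -/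
def IsConnected : Prop := Nonempty G.X ∧ ∀ u v : G.V, Relation.ReflTransGen G.Adj u v

/-- The degree of a divisor `D : V → ℤ`. -/
def degD (D : G.V → ℤ) : ℤ := ∑ v, D v

/-- A divisor is effective if all its coefficients are nonnegative. -/
def Effective (D : G.V → ℤ) : Prop := ∀ v, 0 ≤ D v

/-- `g : V → M^gp` is piecewise linear if, along every half-edge, the difference of the
values of `g` at the two endpoints is an integer multiple of the length of that edge. -/
def IsPL (g : G.V → Gp M) : Prop :=
  ∀ x, G.IsHalfEdge x → ∃ n : ℤ, g (G.rv x) - g (G.rv (G.i x)) = n • Gp.of (G.l x)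

/-- The (outgoing) integer slope of `g` along the half-edge `x`. -/
def slope (g : G.V → Gp M) (x : G.X) : ℤ :=
  if h : ∃ n : ℤ, g (G.rv x) - g (G.rv (G.i x)) = n • Gp.of (G.l x) then h.choose else 0

/-- The Laplacian of a piecewise linear function. -/
def lap (g : G.V → Gp M) : G.V → ℤ :=
  fun v => ∑ x : G.X, if G.IsHalfEdge x ∧ G.r x = v.val then G.slope g x else 0

/-- Principal divisors: those of the form `Δ(g)` for a piecewise linear `g`. -/
def IsPrincipal (D : G.V → ℤ) : Prop := ∃ g, G.IsPL g ∧ G.lap g = D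

/-- The rank of a divisor `D`:
`r(D) = max { k : for every effective divisor F of degree k, |D - F| ≠ ∅ }`. -/
def rank (D : G.V → ℤ) : ℤ :=
  sSup {k : ℤ | ∀ F : G.V → ℤ, G.Effective F → G.degD F = k →
    ∃ E : G.V → ℤ, G.Effective E ∧ G.IsPrincipal (D - F - E)}

/-- The divisorial gonality: the minimal degree of a divisor of rank at least 1. -/
def dgon : ℤ := sInf {d : ℤ | ∃ D : G.V → ℤ, 1 ≤ G.rank D ∧ G.degD D = d}

end MGraph


/-! ### Edge contractions along a monoid homomorphism -/

namespace MGraph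

variable {M : Type} [AddCancelCommMonoid M] {N : Type} [AddCancelCommMonoid N]

/-- `c : Γ → Γ'` realises the `N`-metrised graph `Γ'` as the edge contraction of the
`M`-metrised graph `Γ` along the monoid homomorphism `f : M → N`: all edge lengths are
replaced by their images under `f`, and the edges whose length becomes `0` are contracted
(their endpoints being identified). -/
structure IsEdgeContraction (f : M →+ N) (G : MGraph M) (G' : MGraph N)
    (c : G.X → G'.X) : Prop where
  /-- Every vertex and half-edge of `Γ'` comes from `Γ`. -/
  surj : Function.Surjective c
  /-- `c` commutes with the root maps. -/
  map_r : ∀ x, c (G.r x) = G'.r (c x)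
  /-- `c` commutes with the involutions. -/
  map_i : ∀ x, c (G.i x) = G'.i (c x)
  /-- The length of the image of `x` is `f` of the length of `x`. -/
  map_l : ∀ x, G'.l (c x) = f (G.l x)
  /-- `c x` is a vertex exactly when `x` is a vertex or a contracted half-edge. -/
  vertex_iff : ∀ x, G'.IsVertex (c x) ↔ (G.IsVertex x ∨ f (G.l x) = 0)
  /-- `c` is injective on the non-contracted half-edges. -/
  inj_halfedges : ∀ x y, G'.IsHalfEdge (c x) → c x = c y → x = y
  /-- Two vertices of `Γ` become equal in `Γ'` exactly when they are joined by a chain of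
  contracted edges. -/
  vertex_glue : ∀ u v, G.IsVertex u → G.IsVertex v →
    (c u = c v ↔ Relation.ReflTransGen
      (fun a b => ∃ x, G.IsHalfEdge x ∧ f (G.l x) = 0 ∧ G.r x = a ∧ G.r (G.i x) = b) u v)

namespace IsEdgeContraction

variable {f : M →+ N} {G : MGraph M} {G' : MGraph N} {c : G.X → G'.X}

/-- The induced map on vertices. -/
def cV (hc : IsEdgeContraction f G G' c) : G.V → G'.V :=
  fun v => ⟨c v.val, by
    show G'.i (c v.val) = c v.val
    conv_lhs => rw [← hc.map_i v.val, v.property]⟩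

/-- The pushforward of divisors along the edge contraction:
`f_*(D) = ∑_v D(v) · [c(v)]`. -/
def push (hc : IsEdgeContraction f G G' c) (D : G.V → ℤ) : G'.V → ℤ :=
  fun v' => ∑ v : G.V, if hc.cV v = v' then D v else 0

end IsEdgeContraction

end MGraph

/-! ### Auxiliary lemmas -/

section AuxGp

variable {M : Type} [AddCancelCommMonoid M]

lemma sharp_nsmul_eq_zero (hs : Sharp M) (m : ℕ) (a : M) (h : (m + 1) • a = 0) : a = 0 := by
  rw [succ_nsmul] at h
  exact hs a (m • a) (by rw [add_comm]; exact h)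

lemma Gp.of_nsmul_eq_zero {m : ℕ} {a : M} (h : m • Gp.of a = 0) : m • a = 0 := by
  have h1 : Gp.of (m • a) = 0 := by rw [map_nsmul]; exact h
  have h2 : m • a + 0 = 0 + 0 := Quotient.exact h1
  simpa using h2

lemma Gp.zsmul_of_eq_zero (hs : Sharp M) {n : ℤ} {a : M} (h : n • Gp.of a = 0)
    (ha : a ≠ 0) : n = 0 := by
  rcases n with m | m
  · cases m with
    | zero => rfl
    | succ m =>
      exfalso
      apply ha
      have h1 : (m + 1) • Gp.of a = 0 := by
        rw [← natCast_zsmul]; exact_mod_cast h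
      exact sharp_nsmul_eq_zero hs m a (Gp.of_nsmul_eq_zero h1)
  · exfalso
    apply ha
    rw [negSucc_zsmul, neg_eq_zero] at h
    exact sharp_nsmul_eq_zero hs m a (Gp.of_nsmul_eq_zero h)

lemma Gp.map_of {N : Type} [AddCancelCommMonoid N] (f : M →+ N) (a : M) :
    Gp.map f (Gp.of a) = Gp.of (f a) := by
  show Gp.mk (f a) (f 0) = Gp.mk (f a) 0
  rw [map_zero]

lemma Gp.map_injective {N : Type} [AddCancelCommMonoid N] {f : M →+ N}
    (hf : Function.Injective f) : Function.Injective (Gp.map f) := by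
  intro x y h
  induction x using Quotient.inductionOn with | h a =>
  induction y using Quotient.inductionOn with | h b =>
  have h1 : f a.1 + f b.2 = f b.1 + f a.2 := Quotient.exact h
  rw [← f.map_add, ← f.map_add] at h1
  exact Quotient.sound (hf h1)

lemma MGraph.slope_eq (hs : Sharp M) (G : MGraph M) {g : G.V → Gp M} {x : G.X}
    (hx : G.IsHalfEdge x) {n : ℤ}
    (h : g (G.rv x) - g (G.rv (G.i x)) = n • Gp.of (G.l x)) :
    G.slope g x = n := by
  have hex : ∃ m : ℤ, g (G.rv x) - g (G.rv (G.i x)) = m • Gp.of (G.l x) := ⟨n, h⟩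
  rw [MGraph.slope, dif_pos hex]
  have hspec := hex.choose_spec
  have hl : G.l x ≠ 0 := fun h0 => hx ((G.l_zero_iff x).mp h0)
  have hz : (hex.choose - n) • Gp.of (G.l x) = 0 := by
    rw [sub_zsmul, ← hspec, ← h]
    simp
  have := Gp.zsmul_of_eq_zero hs hz hl
  omega

end AuxGp

section AuxContraction

namespace MGraph.IsEdgeContraction

variable {M N : Type} [AddCancelCommMonoid M] [AddCancelCommMonoid N]
  {f : M →+ N} {G : MGraph M} {G' : MGraph N} {c : G.X → G'.X}

lemma flx_eq_zero_iff (hc : IsEdgeContraction f G G' c) (hf : Function.Injective f) (x : G.X) : f (G.l x) = 0 ↔ G.IsVertex x := by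
  constructor
  · intro h
    have : G.l x = 0 := hf (by rw [h, map_zero])
    exact (G.l_zero_iff x).mp this
  · intro h
    rw [(G.l_zero_iff x).mpr h, map_zero]

lemma vertex_iff' (hc : IsEdgeContraction f G G' c) (hf : Function.Injective f) (x : G.X) : G'.IsVertex (c x) ↔ G.IsVertex x := by
  rw [hc.vertex_iff x]
  constructor
  · rintro (h | h)
    · exact h
    · exact (hc.flx_eq_zero_iff hf x).mp h
  · exact Or.inl

lemma halfEdge_iff (hc : IsEdgeContraction f G G' c) (hf : Function.Injective f) (x : G.X) : G'.IsHalfEdge (c x) ↔ G.IsHalfEdge x :=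
  not_congr (hc.vertex_iff' hf x)

lemma injective (hc : IsEdgeContraction f G G' c) (hf : Function.Injective f) : Function.Injective c := by
  intro x y h
  by_cases hx : G.IsVertex x
  · have hy : G.IsVertex y := by
      rw [← hc.vertex_iff' hf y, ← h, hc.vertex_iff' hf x]; exact hx
    have hpath := (hc.vertex_glue x y hx hy).mp h
    clear h
    induction hpath with
    | refl => rfl
    | tail _ hstep ih =>
      exfalso
      obtain ⟨z, hz, hz0, -, -⟩ := hstep
      exact hz ((hc.flx_eq_zero_iff hf z).mp hz0)
  · exact hc.inj_halfedges x y ((hc.halfEdge_iff hf x).mpr hx) h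

lemma bijective (hc : IsEdgeContraction f G G' c) (hf : Function.Injective f) : Function.Bijective c := ⟨hc.injective hf, hc.surj⟩

lemma cV_injective (hc : IsEdgeContraction f G G' c) (hf : Function.Injective f) : Function.Injective hc.cV := by
  intro u v h
  exact Subtype.ext (hc.injective hf (congrArg Subtype.val h))

lemma cV_surjective (hc : IsEdgeContraction f G G' c) (hf : Function.Injective f) : Function.Surjective hc.cV := by
  intro v'
  obtain ⟨x, hx⟩ := hc.surj v'.val
  have hxv : G.IsVertex x := by
    rw [← hc.vertex_iff' hf x, hx]; exact v'.property
  exact ⟨⟨x, hxv⟩, Subtype.ext hx⟩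

lemma cV_bijective (hc : IsEdgeContraction f G G' c) (hf : Function.Injective f) : Function.Bijective hc.cV := ⟨hc.cV_injective hf, hc.cV_surjective hf⟩

lemma cV_rv (hc : IsEdgeContraction f G G' c) (x : G.X) : hc.cV (G.rv x) = G'.rv (c x) :=
  Subtype.ext (hc.map_r x)

lemma cV_rv_i (hc : IsEdgeContraction f G G' c) (x : G.X) : hc.cV (G.rv (G.i x)) = G'.rv (G'.i (c x)) := by
  rw [← hc.map_i x]
  exact hc.cV_rv (G.i x)

lemma push_cV (hc : IsEdgeContraction f G G' c) (hf : Function.Injective f) (D : G.V → ℤ) (v : G.V) : hc.push D (hc.cV v) = D v := by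
  rw [push]
  rw [show (fun w => if hc.cV w = hc.cV v then D w else 0)
      = (fun w => if w = v then D w else 0) from ?_]
  · simp
  · funext w
    congr 1
    simp only [eq_iff_iff]
    exact ⟨fun h => hc.cV_injective hf h, fun h => by rw [h]⟩

lemma push_sub (hc : IsEdgeContraction f G G' c) (A B : G.V → ℤ) :
    hc.push (A - B) = hc.push A - hc.push B := by
  funext v'
  show (∑ v : G.V, if hc.cV v = v' then A v - B v else 0)
      = (∑ v : G.V, if hc.cV v = v' then A v else 0)
        - ∑ v : G.V, if hc.cV v = v' then B v else 0
  rw [← Finset.sum_sub_distrib]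
  apply Finset.sum_congr rfl
  intro v _
  by_cases h : hc.cV v = v' <;> simp [h]

lemma pull_push (hc : IsEdgeContraction f G G' c) (hf : Function.Injective f)
    (F' : G'.V → ℤ) : hc.push (fun v => F' (hc.cV v)) = F' := by
  funext v'
  obtain ⟨v, rfl⟩ := hc.cV_surjective hf v'
  rw [hc.push_cV hf]

lemma push_effective_iff (hc : IsEdgeContraction f G G' c) (hf : Function.Injective f)
    (F : G.V → ℤ) : G'.Effective (hc.push F) ↔ G.Effective F := by
  constructor
  · intro h v
    have := h (hc.cV v)
    rwa [hc.push_cV hf] at this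
  · intro h v'
    obtain ⟨v, rfl⟩ := hc.cV_surjective hf v'
    rw [hc.push_cV hf]
    exact h v

lemma degD_push (hc : IsEdgeContraction f G G' c) (hf : Function.Injective f)
    (F : G.V → ℤ) : G'.degD (hc.push F) = G.degD F := by
  rw [MGraph.degD, MGraph.degD,
    ← Fintype.sum_bijective hc.cV (hc.cV_bijective hf)
      (fun v => hc.push F (hc.cV v)) (fun v' => hc.push F v') (fun v => rfl)]
  apply Finset.sum_congr rfl
  intro v _
  rw [hc.push_cV hf]

lemma push_injective (hc : IsEdgeContraction f G G' c) (hf : Function.Injective f)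
    {A B : G.V → ℤ} (h : hc.push A = hc.push B) : A = B := by
  funext v
  rw [← hc.push_cV hf A v, ← hc.push_cV hf B v, h]

/-- The key correspondence: if `g` is PL on `G` and `g'` agrees with `Gp.map f ∘ g`
up to an additive constant under the vertex identification, then `g'` is PL on `G'`
and the Laplacians correspond. -/
lemma corr (hc : IsEdgeContraction f G G' c) (hf : Function.Injective f)
    (hsM : Sharp M) (hsN : Sharp N)
    (g : G.V → Gp M) (g' : G'.V → Gp N) (K : Gp N)
    (hg : G.IsPL g) (hrel : ∀ v, g' (hc.cV v) = Gp.map f (g v) + K) :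
    G'.IsPL g' ∧ hc.push (G.lap g) = G'.lap g' := by
  have key : ∀ x : G.X, G.IsHalfEdge x → ∃ n : ℤ,
      (g' (G'.rv (c x)) - g' (G'.rv (G'.i (c x))) = n • Gp.of (G'.l (c x))) ∧
      G.slope g x = n := by
    intro x hx
    obtain ⟨n, hn⟩ := hg x hx
    refine ⟨n, ?_, G.slope_eq hsM hx hn⟩
    rw [← hc.cV_rv x, ← hc.cV_rv_i x, hrel, hrel]
    have heq : Gp.map f (g (G.rv x)) + K - (Gp.map f (g (G.rv (G.i x))) + K)
        = Gp.map f (g (G.rv x) - g (G.rv (G.i x))) := by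
      rw [map_sub]; abel
    rw [heq, hn, map_zsmul, Gp.map_of, hc.map_l]
  have hPL : G'.IsPL g' := by
    intro x' hx'
    obtain ⟨x, rfl⟩ := hc.surj x'
    obtain ⟨n, hn, -⟩ := key x ((hc.halfEdge_iff hf x).mp hx')
    exact ⟨n, hn⟩
  refine ⟨hPL, ?_⟩
  funext v'
  obtain ⟨v, rfl⟩ := hc.cV_surjective hf v'
  rw [hc.push_cV hf]
  show (∑ x : G.X, if G.IsHalfEdge x ∧ G.r x = v.val then G.slope g x else 0)
      = ∑ x' : G'.X, if G'.IsHalfEdge x' ∧ G'.r x' = (hc.cV v).val then G'.slope g' x' else 0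
  rw [← Fintype.sum_bijective c (hc.bijective hf)
    (fun x => if G'.IsHalfEdge (c x) ∧ G'.r (c x) = (hc.cV v).val then G'.slope g' (c x) else 0)
    (fun x' => if G'.IsHalfEdge x' ∧ G'.r x' = (hc.cV v).val then G'.slope g' x' else 0)
    (fun x => rfl)]
  apply Finset.sum_congr rfl
  intro x _
  by_cases hx : G.IsHalfEdge x ∧ G.r x = v.val
  · obtain ⟨n, hn, hs⟩ := key x hx.1
    have hcx : G'.IsHalfEdge (c x) := (hc.halfEdge_iff hf x).mpr hx.1
    have hcond : G'.IsHalfEdge (c x) ∧ G'.r (c x) = (hc.cV v).val :=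
      ⟨hcx, by rw [← hc.map_r]; show c (G.r x) = c v.val; rw [hx.2]⟩
    rw [if_pos hx, if_pos hcond, hs, G'.slope_eq hsN hcx hn]
  · rw [if_neg hx, if_neg ?_]
    intro hcond
    apply hx
    refine ⟨(hc.halfEdge_iff hf x).mp hcond.1, ?_⟩
    have : c (G.r x) = c v.val := by rw [hc.map_r]; exact hcond.2
    exact hc.injective hf this

lemma prin_iff (hc : IsEdgeContraction f G G' c) (hf : Function.Injective f)
    (hsM : Sharp M) (hsN : Sharp N) (hconn : G.IsConnected) (D : G.V → ℤ) :
    G.IsPrincipal D ↔ G'.IsPrincipal (hc.push D) := by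
  constructor
  · rintro ⟨g, hg, rfl⟩
    set e := Equiv.ofBijective _ (hc.cV_bijective hf) with he
    have hrel : ∀ v, (fun v' => Gp.map f (g (e.symm v'))) (hc.cV v)
        = Gp.map f (g v) + 0 := by
      intro v
      show Gp.map f (g (e.symm (e v))) = Gp.map f (g v) + 0
      rw [e.symm_apply_apply, add_zero]
    obtain ⟨hPL, hlap⟩ := hc.corr hf hsM hsN g (fun v' => Gp.map f (g (e.symm v'))) 0 hg hrel
    exact ⟨_, hPL, hlap.symm⟩
  · rintro ⟨g', hg', hlap⟩
    obtain ⟨x0⟩ := hconn.1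
    set v0 := G.rv x0 with hv0
    have hrange : ∀ v, ∃ a, Gp.map f a = g' (hc.cV v) - g' (hc.cV v0) := by
      intro v
      have hpath := hconn.2 v0 v
      induction hpath with
      | refl => exact ⟨0, by simp⟩
      | @tail b w hab hstep ih =>
        obtain ⟨a, ha⟩ := ih
        obtain ⟨x, hx, hrvx, hrvix⟩ := hstep
        obtain ⟨n, hn⟩ := hg' (c x) ((hc.halfEdge_iff hf x).mpr hx)
        rw [← hc.cV_rv x, ← hc.cV_rv_i x, hrvx, hrvix, hc.map_l, ← Gp.map_of,
          ← map_zsmul] at hn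
        refine ⟨a - n • Gp.of (G.l x), ?_⟩
        rw [map_sub, ha, ← hn]
        abel
    choose g hgspec using hrange
    have hrel : ∀ v, g' (hc.cV v) = Gp.map f (g v) + g' (hc.cV v0) := by
      intro v
      rw [hgspec]
      abel
    have hgPL : G.IsPL g := by
      intro x hx
      obtain ⟨n, hn⟩ := hg' (c x) ((hc.halfEdge_iff hf x).mpr hx)
      rw [← hc.cV_rv x, ← hc.cV_rv_i x, hc.map_l, ← Gp.map_of, ← map_zsmul] at hn
      refine ⟨n, Gp.map_injective hf ?_⟩
      rw [map_sub, hgspec, hgspec, ← hn]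
      abel
    obtain ⟨-, hlap'⟩ := hc.corr hf hsM hsN g g' (g' (hc.cV v0)) hgPL hrel
    rw [hlap] at hlap'
    exact ⟨g, hgPL, hc.push_injective hf hlap'⟩

end MGraph.IsEdgeContraction

end AuxContraction

/-- **Remark 4.5.** Let `Γ` be an `M`-metrised graph and `f : M → N` an injective
homomorphism of sharp integral monoids. Then the edge contraction `Γ'` of `Γ` along `f`
has the same underlying graph as `Γ` (no edges are contracted, i.e. the contraction map
is an isomorphism of underlying graphs), `Prin(Γ) = Prin(Γ')` under the identification of
vertex sets, and `r(f_*(D)) = r(D)` for every divisor `D` on `Γ`. -/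
theorem MGraph.IsEdgeContraction.of_injective (M N : Type) [AddCancelCommMonoid M]
    [AddCancelCommMonoid N] (hsharpM : Sharp M) (hsharpN : Sharp N)
    (G : MGraph M) (G' : MGraph N) (hconn : G.IsConnected)
    (f : M →+ N) (hf : Function.Injective f)
    (c : G.X → G'.X) (hc : MGraph.IsEdgeContraction f G G' c) :
    Function.Bijective c ∧
      (∀ D : G.V → ℤ, G.IsPrincipal D ↔ G'.IsPrincipal (hc.push D)) ∧
      (∀ D : G.V → ℤ, G'.rank (hc.push D) = G.rank D) := by
  have hprin : ∀ D : G.V → ℤ, G.IsPrincipal D ↔ G'.IsPrincipal (hc.push D) :=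
    fun D => hc.prin_iff hf hsharpM hsharpN hconn D
  refine ⟨hc.bijective hf, hprin, ?_⟩
  intro D
  rw [MGraph.rank, MGraph.rank]
  congr 1
  ext k
  simp only [Set.mem_setOf_eq]
  constructor
  · intro hk F hF hdF
    obtain ⟨E', hE', hP⟩ := hk (hc.push F) ((hc.push_effective_iff hf F).mpr hF)
      (by rw [hc.degD_push hf, hdF])
    refine ⟨fun v => E' (hc.cV v), fun v => hE' (hc.cV v), ?_⟩
    apply (hprin _).mpr
    rw [hc.push_sub, hc.push_sub, hc.pull_push hf]
    exact hP
  · intro hk F' hF' hdF'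
    obtain ⟨E, hE, hP⟩ := hk (fun v => F' (hc.cV v)) (fun v => hF' (hc.cV v))
      (by rw [← hc.degD_push hf, hc.pull_push hf, hdF'])
    refine ⟨hc.push E, (hc.push_effective_iff hf E).mpr hE, ?_⟩
    have hP' := (hprin _).mp hP
    rwa [hc.push_sub, hc.push_sub, hc.pull_push hf] at hP'

end
end

section
/- Let Γ be an ℕ-metrised graph without loops, and let G be the underlying graph. Let H be the graph obtained from G by subdividing every edge {e, i(e)} of G exactly l(e) − 1 times, regarded as an ℕ-metrised graph in which every edge has length 1. Then dgon(Γ) ≥ dgon(H). -/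
noncomputable section
open scoped Classical

/-! ### Groupification of a cancellative additive commutative monoid -/

variable (M : Type) [AddCancelCommMonoid M]

/-! ### Unit subdivision of an `ℕ`-metrised graph

Given an `ℕ`-metrised graph `Γ`, the graph `Subdiv Γ` is the subdivision of the
underlying graph of `Γ` in which every edge `{e, i e}` is subdivided exactly
`l e - 1` times (so an edge of length `k` becomes a path of `k` edges), regarded as an
`ℕ`-metrised graph in which every edge has length `1`. -/

namespace MGraph

variable (G : MGraph ℕ)

/-- An arbitrary enumeration of `X`, used only to pick a canonical half-edge inside each
edge of `G`. -/
def ordx : G.X → ℕ := fun x => ((Fintype.equivFin G.X) x : ℕ)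

/-- Interior vertices of the subdivision: the vertex at distance `j` from `r e` on the
path replacing the edge `{e, i e}` (where `0 < j < l e`), recorded on the canonical
half-edge of the edge. -/
def IntVert : Type :=
  {p : G.X × ℕ // G.IsHalfEdge p.1 ∧ 0 < p.2 ∧ p.2 < G.l p.1 ∧
    ordx G p.1 ≤ ordx G (G.i p.1)}

/-- Half-edges of the subdivision: the half-edge of the `j`-th unit segment (counted from
`r e`) of the path replacing the edge `{e, i e}`, rooted at the endpoint at distance `j`
from `r e` (where `0 ≤ j < l e`). -/
def SubH : Type := {p : G.X × ℕ // G.IsHalfEdge p.1 ∧ p.2 < G.l p.1}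

instance : Finite (IntVert G) :=
  Finite.of_injective
    (fun p => ((p.val.1, ⟨p.val.2, by
      have h2 := p.property.2.2.1
      have hle : G.l p.val.1 ≤ Finset.univ.sup G.l := Finset.le_sup (Finset.mem_univ _)
      omega⟩) : G.X × Fin (Finset.univ.sup G.l + 1)))
    (by
      intro p q h
      apply Subtype.ext
      have h1 := congrArg Prod.fst h
      have h2 := congrArg (fun z => (z.2 : ℕ)) h
      exact Prod.ext h1 h2)

instance : Finite (SubH G) :=
  Finite.of_injective
    (fun p => ((p.val.1, ⟨p.val.2, by
      have h2 := p.property.2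
      have hle : G.l p.val.1 ≤ Finset.univ.sup G.l := Finset.le_sup (Finset.mem_univ _)
      omega⟩) : G.X × Fin (Finset.univ.sup G.l + 1)))
    (by
      intro p q h
      apply Subtype.ext
      have h1 := congrArg Prod.fst h
      have h2 := congrArg (fun z => (z.2 : ℕ)) h
      exact Prod.ext h1 h2)

/-- Vertices of the subdivision: old vertices plus interior vertices. -/
abbrev SubV : Type := G.V ⊕ IntVert G

/-- The canonical presentation of the interior vertex at distance `j` from `r e` along
the path replacing the edge `{e, i e}` (so also at distance `l e - j` from `r (i e)`). -/
def ivtx (e : G.X) (he : G.IsHalfEdge e) (j : ℕ) (hj : 0 < j) (hj' : j < G.l e) :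
    IntVert G :=
  if h : ordx G e ≤ ordx G (G.i e) then ⟨(e, j), he, hj, hj', h⟩
  else
    ⟨(G.i e, G.l e - j), by
      refine ⟨?_, by omega, ?_, ?_⟩
      · show G.i (G.i e) ≠ G.i e
        rw [G.i_invol]
        exact fun hx => he hx.symm
      · show G.l e - j < G.l (G.i e)
        rw [G.l_i]
        omega
      · show ordx G (G.i e) ≤ ordx G (G.i (G.i e))
        rw [G.i_invol]
        omega⟩

/-- The root map of the subdivision. -/
def subR : SubV G ⊕ SubH G → SubV G ⊕ SubH G
  | .inl v => .inl v
  | .inr p =>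
      if h : p.val.2 = 0 then .inl (.inl (G.rv p.val.1))
      else .inl (.inr (ivtx G p.val.1 p.property.1 p.val.2 (Nat.pos_of_ne_zero h)
        p.property.2))

/-- The involution of the subdivision: the `j`-th segment of `e`, seen from its other
endpoint, is the `(l e - 1 - j)`-th segment of `i e`. -/
def subI : SubV G ⊕ SubH G → SubV G ⊕ SubH G
  | .inl v => .inl v
  | .inr p =>
      .inr ⟨(G.i p.val.1, G.l p.val.1 - 1 - p.val.2), by
        have h1 : p.val.2 < G.l p.val.1 := p.property.2
        refine ⟨?_, ?_⟩
        · show G.i (G.i p.val.1) ≠ G.i p.val.1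
          rw [G.i_invol]
          exact fun hx => p.property.1 hx.symm
        · show G.l p.val.1 - 1 - p.val.2 < G.l (G.i p.val.1)
          rw [G.l_i]
          have h0 : G.l p.val.1 ≠ 0 :=
            fun h => p.property.1 ((G.l_zero_iff p.val.1).mp h)
          omega⟩

/-- The length function of the subdivision: every edge has length `1`. -/
def subL : SubV G ⊕ SubH G → ℕ
  | .inl _ => 0
  | .inr _ => 1

lemma subI_ne (p : SubH G) : subI G (Sum.inr p) ≠ Sum.inr p := by
  intro h
  apply p.property.1
  have h' := congrArg Subtype.val (Sum.inr.inj h)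
  exact congrArg Prod.fst h'

/-- The subdivision of (the underlying graph of) the `ℕ`-metrised graph `G` in which
every edge `{e, i e}` is subdivided exactly `l e - 1` times, regarded as an `ℕ`-metrised
graph in which every edge has length `1`. -/
noncomputable def Subdiv : MGraph ℕ where
  X := SubV G ⊕ SubH G
  finX := Fintype.ofFinite _
  r := subR G
  i := subI G
  r_idem := by
    rintro (v | p)
    · rfl
    · by_cases h : p.val.2 = 0 <;> simp [subR, h]
  i_invol := by
    rintro (v | p)
    · rfl
    · apply congrArg Sum.inr
      apply Subtype.ext
      have h1 : p.val.2 < G.l p.val.1 := p.property.2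
      have h0 : G.l p.val.1 ≠ 0 := fun h => p.property.1 ((G.l_zero_iff p.val.1).mp h)
      simp only [subI]
      refine Prod.ext (G.i_invol p.val.1) ?_
      show G.l (G.i p.val.1) - 1 - (G.l p.val.1 - 1 - p.val.2) = p.val.2
      rw [G.l_i]
      omega
  fix_iff := by
    rintro (v | p)
    · simp [subI, subR]
    · constructor
      · intro h
        exact absurd h (subI_ne G p)
      · intro h
        exfalso
        by_cases h0 : p.val.2 = 0 <;> simp [subR, h0] at h
  l := subL G
  l_i := by rintro (v | p) <;> rfl
  l_zero_iff := by
    rintro (v | p)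
    · simp [subL, subI]
    · simp only [subL]
      constructor
      · intro h
        exact absurd h one_ne_zero
      · intro h
        exact absurd h (subI_ne G p)

/-- The same underlying graph as `G`, re-equipped with the `ℕ`-valued metric `l₂`. -/
def reMetrize {M : Type} [AddCancelCommMonoid M] (G : MGraph M) (l₂ : G.X → ℕ)
    (h1 : ∀ x, l₂ (G.i x) = l₂ x) (h2 : ∀ x, l₂ x = 0 ↔ G.i x = x) : MGraph ℕ where
  X := G.X
  finX := G.finX
  r := G.r
  i := G.i
  r_idem := G.r_idem
  i_invol := G.i_invol
  fix_iff := G.fix_iff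
  l := l₂
  l_i := h1
  l_zero_iff := h2

end MGraph

/-! Extend a divisor `D` of rank `≥ 1` on `G` by zero to the subdivision. For an old vertex
`v`, a section `φ` of `D - [v]` extends linearly along the subdivided edges. For an interior
point `w` of an edge from `u` to `u'`, take sections `φ₁` of `D - [u]` and `φ₂` of `D - [u']`.
If their slopes along the edge differ, the maximum of their linear extensions, shifted to agree
at `w`, has a kink at `w`. If the slopes agree, the maximum saves a chip at both `u` and `u'`,
and as `u ≠ u'` a trapezoid on the edge carries these two chips to `w` and its mirror point.
So the extension still has rank `≥ 1`, with the same degree. -/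

namespace Gp

def toInt : Gp ℕ →+ ℤ where
  toFun := Quotient.lift (fun p : ℕ × ℕ => (p.1 : ℤ) - p.2)
    fun p q (h : p.1 + q.2 = q.1 + p.2) => by omega
  map_zero' := rfl
  map_add' := by
    rintro ⟨a⟩ ⟨b⟩
    change ((a.1 + b.1 : ℕ) : ℤ) - ((a.2 + b.2 : ℕ) : ℤ) =
      ((a.1 : ℤ) - a.2) + ((b.1 : ℤ) - b.2)
    push_cast; ring

@[simp] lemma toInt_of (n : ℕ) : toInt (of n) = n := by
  change ((n : ℤ) - ((0 : ℕ) : ℤ)) = n; simp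

lemma of_eq_nsmul_of_one (n : ℕ) : of n = n • of 1 := by
  rw [← map_nsmul, smul_eq_mul, mul_one]

end Gp

namespace MGraph

section

variable {Γ : MGraph ℕ}

lemma IsHalfEdge.i {x : Γ.X} (hx : Γ.IsHalfEdge x) : Γ.IsHalfEdge (Γ.i x) := by
  unfold IsHalfEdge; rw [Γ.i_invol]; exact fun h => hx h.symm

lemma IsHalfEdge.l_pos {x : Γ.X} (hx : Γ.IsHalfEdge x) : 0 < Γ.l x :=
  Nat.pos_of_ne_zero fun h => hx ((Γ.l_zero_iff x).mp h)

variable (Γ)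

/-- Integer division: the true slope only when `IsIntPL φ`. -/
def intSlope (φ : Γ.V → ℤ) (x : Γ.X) : ℤ := (φ (Γ.rv x) - φ (Γ.rv (Γ.i x))) / Γ.l x

def IsIntPL (φ : Γ.V → ℤ) : Prop :=
  ∀ x, Γ.IsHalfEdge x → (Γ.l x : ℤ) ∣ φ (Γ.rv x) - φ (Γ.rv (Γ.i x))

def intLap (φ : Γ.V → ℤ) : Γ.V → ℤ :=
  fun v => ∑ x : Γ.X, if Γ.IsHalfEdge x ∧ Γ.r x = v.val then Γ.intSlope φ x else 0

variable {Γ}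

lemma intSlope_mul {φ : Γ.V → ℤ} (hφ : Γ.IsIntPL φ) {x : Γ.X} (hx : Γ.IsHalfEdge x) :
    Γ.intSlope φ x * Γ.l x = φ (Γ.rv x) - φ (Γ.rv (Γ.i x)) :=
  Int.ediv_mul_cancel (hφ x hx)

lemma intSlope_i {φ : Γ.V → ℤ} (hφ : Γ.IsIntPL φ) {x : Γ.X} (hx : Γ.IsHalfEdge x) :
    Γ.intSlope φ (Γ.i x) = -Γ.intSlope φ x := by
  unfold intSlope
  rw [Γ.i_invol, Γ.l_i, ← Int.neg_ediv_of_dvd (hφ x hx), neg_sub]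

lemma slope_mul {g : Γ.V → Gp ℕ} (hg : Γ.IsPL g) {x : Γ.X} (hx : Γ.IsHalfEdge x) :
    Γ.slope g x * Γ.l x = Gp.toInt (g (Γ.rv x)) - Gp.toInt (g (Γ.rv (Γ.i x))) := by
  have h := congrArg Gp.toInt (hg x hx).choose_spec
  rw [map_sub, map_zsmul, Gp.toInt_of, smul_eq_mul] at h
  rw [slope, dif_pos (hg x hx), h]

lemma isIntPL_toInt_comp {g : Γ.V → Gp ℕ} (hg : Γ.IsPL g) : Γ.IsIntPL (Gp.toInt ∘ g) :=
  fun x hx => ⟨Γ.slope g x, by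
    rw [Function.comp_apply, Function.comp_apply, ← slope_mul hg hx, mul_comm]⟩

lemma lap_eq_intLap {g : Γ.V → Gp ℕ} (hg : Γ.IsPL g) :
    Γ.lap g = Γ.intLap (Gp.toInt ∘ g) := by
  funext v
  refine Finset.sum_congr rfl fun x _ => if_ctx_congr Iff.rfl (fun hx => ?_) fun _ => rfl
  have hl : (Γ.l x : ℤ) ≠ 0 := by exact_mod_cast hx.1.l_pos.ne'
  rw [intSlope, Function.comp_apply, Function.comp_apply, ← slope_mul hg hx.1,
    Int.mul_ediv_cancel _ hl]

lemma isPL_smul_of_one {φ : Γ.V → ℤ} (hφ : Γ.IsIntPL φ) :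
    Γ.IsPL fun v => φ v • Gp.of 1 := fun x hx => ⟨Γ.intSlope φ x, by
  rw [← sub_smul, ← intSlope_mul hφ hx, Gp.of_eq_nsmul_of_one (Γ.l x), mul_smul,
    natCast_zsmul]⟩

lemma isPrincipal_iff {D : Γ.V → ℤ} :
    Γ.IsPrincipal D ↔ ∃ φ, Γ.IsIntPL φ ∧ Γ.intLap φ = D := by
  constructor
  · rintro ⟨g, hg, rfl⟩
    exact ⟨_, isIntPL_toInt_comp hg, (lap_eq_intLap hg).symm⟩
  · rintro ⟨φ, hφ, rfl⟩
    refine ⟨_, isPL_smul_of_one hφ, ?_⟩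
    rw [lap_eq_intLap (isPL_smul_of_one hφ)]
    congr 1
    funext v
    simp

lemma rv_eq_iff {x : Γ.X} {v : Γ.V} : Γ.rv x = v ↔ Γ.r x = v.val := Subtype.ext_iff

lemma intLap_apply (φ : Γ.V → ℤ) (v : Γ.V) :
    Γ.intLap φ v = ∑ x, if Γ.IsHalfEdge x ∧ Γ.rv x = v then Γ.intSlope φ x else 0 := by
  simp only [intLap, rv_eq_iff]

lemma degD_intLap {φ : Γ.V → ℤ} (hφ : Γ.IsIntPL φ) : Γ.degD (Γ.intLap φ) = 0 := by
  set f : Γ.X → ℤ := fun x => if Γ.IsHalfEdge x then Γ.intSlope φ x else 0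
  have hdeg : Γ.degD (Γ.intLap φ) = ∑ x, f x := by
    simp only [degD, intLap_apply, ite_and]
    rw [Finset.sum_comm]
    refine Finset.sum_congr rfl fun x _ => ?_
    split_ifs <;> simp [f, *]
  have hodd : ∀ x, f (Γ.i x) = -f x := fun x => by
    by_cases hx : Γ.IsHalfEdge x
    · simp only [f, if_pos hx, if_pos hx.i, intSlope_i hφ hx]
    · simp only [f, if_neg hx, not_not.mp hx, neg_zero]
  have hswap : ∑ x, f (Γ.i x) = ∑ x, f x :=
    Equiv.sum_comp (Function.Involutive.toPerm _ Γ.i_invol) f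
  simp only [hodd, Finset.sum_neg_distrib] at hswap
  omega

lemma degD_nonneg {F : Γ.V → ℤ} (hF : Γ.Effective F) : 0 ≤ Γ.degD F :=
  Finset.sum_nonneg fun v _ => hF v

lemma degD_add (D E : Γ.V → ℤ) : Γ.degD (D + E) = Γ.degD D + Γ.degD E :=
  Finset.sum_add_distrib

lemma degD_sub (D E : Γ.V → ℤ) : Γ.degD (D - E) = Γ.degD D - Γ.degD E :=
  Finset.sum_sub_distrib _ _

lemma degD_single (w : Γ.V) (k : ℤ) : Γ.degD (Pi.single w k) = k :=
  Finset.sum_pi_single' w k _ |>.trans (if_pos (Finset.mem_univ w))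

lemma effective_single (w : Γ.V) {k : ℤ} (hk : 0 ≤ k) : Γ.Effective (Pi.single w k) := by
  intro v
  rcases eq_or_ne v w with rfl | h
  · simpa
  · simp [h]

lemma effective_degD_eq_one_iff {F : Γ.V → ℤ} :
    Γ.Effective F ∧ Γ.degD F = 1 ↔ ∃ w, F = Pi.single w 1 := by
  constructor
  · rintro ⟨hF, hdeg⟩
    obtain ⟨w, hw⟩ : ∃ w, 0 < F w := by
      by_contra! h
      have : Γ.degD F ≤ 0 := Finset.sum_nonpos fun v _ => h v
      omega
    have hrest : ∑ v ∈ Finset.univ.erase w, F v = 1 - F w := by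
      rw [← hdeg, degD, ← Finset.add_sum_erase _ _ (Finset.mem_univ w)]; ring
    have hrest0 : ∀ v ∈ Finset.univ.erase w, F v = 0 :=
      (Finset.sum_eq_zero_iff_of_nonneg fun v _ => hF v).mp
        (le_antisymm (by omega) (Finset.sum_nonneg fun v _ => hF v))
    have hw1 : F w = 1 := by
      have := Finset.sum_nonneg fun v (_ : v ∈ Finset.univ.erase w) => hF v
      omega
    refine ⟨w, funext fun v => ?_⟩
    rcases eq_or_ne v w with rfl | h
    · simpa using hw1
    · simp [h, hrest0 v (Finset.mem_erase.mpr ⟨h, Finset.mem_univ v⟩)]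
  · rintro ⟨w, rfl⟩
    exact ⟨effective_single w zero_le_one, degD_single w 1⟩

lemma exists_effective_isPrincipal_sub_iff {D : Γ.V → ℤ} :
    (∃ E, Γ.Effective E ∧ Γ.IsPrincipal (D - E)) ↔
      ∃ φ, Γ.IsIntPL φ ∧ Γ.intLap φ ≤ D := by
  simp only [isPrincipal_iff]
  constructor
  · rintro ⟨E, hE, φ, hφ, hlap⟩
    exact ⟨φ, hφ, fun v => by have := congrFun hlap v; have := hE v; simp_all⟩
  · rintro ⟨φ, hφ, hle⟩
    exact ⟨D - Γ.intLap φ, fun v => sub_nonneg.mpr (hle v), φ, hφ,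
      (sub_sub_cancel _ _).symm⟩

variable (Γ) in
def rankSet (D : Γ.V → ℤ) : Set ℤ :=
  {k | ∀ F, Γ.Effective F → Γ.degD F = k →
    ∃ E, Γ.Effective E ∧ Γ.IsPrincipal (D - F - E)}

lemma neg_one_mem_rankSet (D : Γ.V → ℤ) : -1 ∈ Γ.rankSet D := fun F hF hdeg => by
  have := degD_nonneg hF
  omega

lemma mem_rankSet_of_le [Nonempty Γ.V] {D : Γ.V → ℤ} {k k' : ℤ} (hk : k ∈ Γ.rankSet D)
    (hk' : k' ≤ k) : k' ∈ Γ.rankSet D := by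
  intro F hF hdeg
  let w : Γ.V := Classical.arbitrary _
  obtain ⟨E, hE, hP⟩ := hk (F + Pi.single w (k - k'))
    (fun v => add_nonneg (hF v) (effective_single w (sub_nonneg.mpr hk') v))
    (by rw [degD_add, hdeg, degD_single]; ring)
  refine ⟨E + Pi.single w (k - k'),
    fun v => add_nonneg (hE v) (effective_single w (sub_nonneg.mpr hk') v), ?_⟩
  convert hP using 1
  abel

lemma le_degD_of_mem_rankSet [Nonempty Γ.V] {D : Γ.V → ℤ} {k : ℤ} (hk : k ∈ Γ.rankSet D)
    (hk0 : 0 ≤ k) : k ≤ Γ.degD D := by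
  let w : Γ.V := Classical.arbitrary _
  obtain ⟨E, hE, hP⟩ := hk (Pi.single w k) (effective_single w hk0) (degD_single w k)
  obtain ⟨φ, hφ, hlap⟩ := isPrincipal_iff.mp hP
  have h := degD_intLap hφ
  rw [hlap, degD_sub, degD_sub, degD_single] at h
  have := degD_nonneg hE
  omega

lemma bddAbove_rankSet [Nonempty Γ.V] (D : Γ.V → ℤ) : BddAbove (Γ.rankSet D) :=
  ⟨max (Γ.degD D) 0, fun k hk => (le_total k 0).elim (le_max_of_le_right ·)
    fun hk0 => le_max_of_le_left (le_degD_of_mem_rankSet hk hk0)⟩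

lemma le_rank_iff [Nonempty Γ.V] {D : Γ.V → ℤ} {k : ℤ} :
    k ≤ Γ.rank D ↔ k ∈ Γ.rankSet D :=
  ⟨mem_rankSet_of_le (Int.csSup_mem ⟨-1, neg_one_mem_rankSet D⟩ (bddAbove_rankSet D)),
    fun h => le_csSup (bddAbove_rankSet D) h⟩

theorem one_le_rank_iff [Nonempty Γ.V] {D : Γ.V → ℤ} :
    1 ≤ Γ.rank D ↔ ∀ w, ∃ φ, Γ.IsIntPL φ ∧ Γ.intLap φ ≤ D - Pi.single w 1 := by
  rw [le_rank_iff]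
  constructor
  · intro h w
    exact exists_effective_isPrincipal_sub_iff.mp
      (h _ (effective_single w zero_le_one) (degD_single w 1))
  · intro h F hF hdeg
    obtain ⟨w, rfl⟩ := effective_degD_eq_one_iff.mp ⟨hF, hdeg⟩
    exact exists_effective_isPrincipal_sub_iff.mpr (h w)

lemma sub_single_le {D : Γ.V → ℤ} (w : Γ.V) : D - Pi.single w 1 ≤ D :=
  fun v => sub_le_self _ (effective_single w zero_le_one v)

variable (Γ) in
def gonSet : Set ℤ := {d | ∃ D : Γ.V → ℤ, 1 ≤ Γ.rank D ∧ Γ.degD D = d}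

lemma bddBelow_gonSet [Nonempty Γ.V] : BddBelow Γ.gonSet :=
  ⟨1, by
    rintro _ ⟨D, hD, rfl⟩
    exact le_degD_of_mem_rankSet (le_rank_iff.mp hD) zero_le_one⟩

lemma gonSet_nonempty [Nonempty Γ.V] : Γ.gonSet.Nonempty := by
  refine ⟨_, 1, one_le_rank_iff.mpr fun w => ⟨0, fun x _ => by simp, fun v => ?_⟩, rfl⟩
  simp only [intLap, intSlope, Pi.zero_apply, sub_self, Int.zero_ediv, ite_self,
    Finset.sum_const_zero, Pi.sub_apply, Pi.one_apply, Pi.single_apply]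
  split_ifs <;> norm_num

end

section

variable {G : MGraph ℕ} {D : G.V → ℤ}

instance : Fintype (IntVert G) := Fintype.ofFinite _
instance : Fintype (SubH G) := Fintype.ofFinite _

/-- The vertex of the subdivision at distance `t` from `r e` on the path replacing `{e, i e}`. -/
def pt (e : G.X) (t : ℕ) : SubV G :=
  if h : G.IsHalfEdge e ∧ 0 < t ∧ t < G.l e then .inr (ivtx G e h.1 t h.2.1 h.2.2)
  else if t = 0 then .inl (G.rv e) else .inl (G.rv (G.i e))

lemma pt_zero (e : G.X) : pt e 0 = .inl (G.rv e) := by simp [pt]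

lemma pt_l {e : G.X} (he : G.IsHalfEdge e) : pt e (G.l e) = .inl (G.rv (G.i e)) := by
  simp [pt, he.l_pos.ne']

lemma pt_of_pos_of_lt {e : G.X} (he : G.IsHalfEdge e) {t : ℕ} (h0 : 0 < t) (hl : t < G.l e) :
    pt e t = .inr (ivtx G e he t h0 hl) := by
  simp [pt, he, h0, hl]

lemma i_inj {x y : G.X} : G.i x = G.i y ↔ x = y :=
  ⟨fun h => by rw [← G.i_invol x, h, G.i_invol], congrArg G.i⟩

lemma i_eq_iff {x y : G.X} : G.i x = y ↔ x = G.i y := by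
  rw [← i_inj, G.i_invol]

lemma ordx_ne {e : G.X} (he : G.IsHalfEdge e) : ordx G e ≠ ordx G (G.i e) := fun h =>
  he ((Fintype.equivFin G.X).injective (Fin.val_injective h)).symm

lemma ivtx_val {e : G.X} (he : G.IsHalfEdge e) {t : ℕ} (h0 : 0 < t) (hl : t < G.l e) :
    (ivtx G e he t h0 hl).1 =
      if ordx G e ≤ ordx G (G.i e) then (e, t) else (G.i e, G.l e - t) := by
  unfold ivtx
  by_cases h : ordx G e ≤ ordx G (G.i e)
  · erw [dif_pos h, if_pos h]
  · erw [dif_neg h, if_neg h]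

lemma ivtx_i {e : G.X} (he : G.IsHalfEdge e) {t : ℕ} (h0 : 0 < t) (hl : t < G.l e) :
    ivtx G (G.i e) he.i (G.l e - t) (by omega) (by rw [G.l_i]; omega) = ivtx G e he t h0 hl := by
  have hne := ordx_ne he
  refine Subtype.ext ?_
  rw [ivtx_val, ivtx_val, G.i_invol, G.l_i]
  split_ifs <;> first | omega | exact Prod.ext rfl (by omega)

lemma pt_i {e : G.X} (he : G.IsHalfEdge e) {t : ℕ} (ht : t ≤ G.l e) :
    pt (G.i e) t = pt e (G.l e - t) := by
  rcases Nat.eq_zero_or_pos t with rfl | h0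
  · rw [pt_zero, Nat.sub_zero, pt_l he]
  rcases ht.lt_or_eq with hl | rfl
  · rw [pt_of_pos_of_lt he.i h0 (by rwa [G.l_i]), pt_of_pos_of_lt he (by omega) (by omega),
      ← ivtx_i he (by omega) (by omega)]
    congr 2; omega
  · rw [← G.l_i, pt_l he.i, Nat.sub_self, pt_zero, G.i_invol]

lemma pt_eq_inr {e : G.X} (he : G.IsHalfEdge e) {t : ℕ} (h0 : 0 < t) (hl : t < G.l e) :
    ∃ q : IntVert G, pt e t = .inr q ∧ (q.1 = (e, t) ∨ q.1 = (G.i e, G.l e - t)) := by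
  refine ⟨_, pt_of_pos_of_lt he h0 hl, ?_⟩
  rw [ivtx_val]
  split_ifs
  exacts [.inl rfl, .inr rfl]

lemma inr_eq_pt (q : IntVert G) : (.inr q : SubV G) = pt q.1.1 q.1.2 := by
  obtain ⟨⟨e, t⟩, he, h0, hl, hord⟩ := q
  rw [pt_of_pos_of_lt he h0 hl]
  exact congrArg _ (Subtype.ext (by rw [ivtx_val, if_pos hord]))

lemma pt_eq_inl_iff {e : G.X} (he : G.IsHalfEdge e) {t : ℕ} (hl : t < G.l e) {v : G.V} :
    pt e t = .inl v ↔ t = 0 ∧ G.rv e = v := by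
  rcases Nat.eq_zero_or_pos t with rfl | h0
  · simp [pt_zero]
  · simp [pt_of_pos_of_lt he h0 hl, h0.ne']

lemma pt_eq_pt_iff {x e : G.X} (hx : G.IsHalfEdge x) (he : G.IsHalfEdge e) {k j : ℕ}
    (hk : k < G.l x) (hj0 : 0 < j) (hjl : j < G.l e) :
    pt x k = pt e j ↔ (x, k) = (e, j) ∨ (x, k) = (G.i e, G.l e - j) := by
  constructor
  · intro h
    obtain ⟨q', hq', hq'e⟩ := pt_eq_inr he hj0 hjl
    rcases Nat.eq_zero_or_pos k with rfl | hk0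
    · rw [pt_zero, hq'] at h; cases h
    obtain ⟨q, hq, hqx⟩ := pt_eq_inr hx hk0 hk
    obtain rfl : q = q' := Sum.inr_injective (hq.symm.trans (h.trans hq'))
    rcases hqx with h1 | h1 <;> rcases hq'e with h2 | h2 <;> rw [h1, Prod.ext_iff] at h2 <;>
      obtain ⟨hxe, hkj⟩ := h2
    · exact .inl (Prod.ext hxe hkj)
    · exact .inr (Prod.ext hxe hkj)
    · obtain rfl := i_eq_iff.mp hxe
      rw [G.l_i] at hkj
      exact .inr (Prod.ext rfl (by simp only at hkj ⊢; omega))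
    · obtain rfl := i_inj.mp hxe
      exact .inl (Prod.ext rfl (by simp only at hkj ⊢; omega))
  · rintro (h | h) <;> obtain ⟨rfl, rfl⟩ := Prod.ext_iff.mp h
    · rfl
    · exact (pt_i he (by omega)).trans (by congr 1; omega)

variable (G) in
def subdivVertEquiv : SubV G ≃ (Subdiv G).V where
  toFun v := ⟨.inl v, rfl⟩
  invFun
    | ⟨.inl v, _⟩ => v
    | ⟨.inr p, h⟩ => absurd h (subI_ne G p)
  left_inv _ := rfl
  right_inv
    | ⟨.inl _, _⟩ => rfl
    | ⟨.inr p, h⟩ => absurd h (subI_ne G p)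

lemma subR_inr (p : SubH G) : subR G (.inr p) = .inl (pt p.1.1 p.1.2) := by
  obtain ⟨⟨e, t⟩, he, hl⟩ := p
  rcases Nat.eq_zero_or_pos t with rfl | h0
  · simp [subR, pt_zero]
  · simp [subR, pt_of_pos_of_lt he h0 hl, h0.ne']

lemma subR_subI_inr (p : SubH G) : subR G (subI G (.inr p)) = .inl (pt p.1.1 (p.1.2 + 1)) := by
  obtain ⟨⟨e, t⟩, he, hl⟩ := p
  refine (subR_inr _).trans (congrArg Sum.inl ?_)
  dsimp only at he hl
  change pt (G.i e) (G.l e - 1 - t) = pt e (t + 1)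
  rw [pt_i he (by omega)]
  congr 1; omega

/-- The Laplacian of the subdivision, transported to `SubV G`: each `p : SubH G` is the unit
segment from `pt p.1.1 p.1.2` to `pt p.1.1 (p.1.2 + 1)`. -/
def subdivLap (ψ : SubV G → ℤ) (v : SubV G) : ℤ :=
  ∑ p : SubH G, if pt p.1.1 p.1.2 = v then ψ v - ψ (pt p.1.1 (p.1.2 + 1)) else 0

lemma intLap_subdiv (ψ : SubV G → ℤ) (v : SubV G) :
    (Subdiv G).intLap (ψ ∘ (subdivVertEquiv G).symm) (subdivVertEquiv G v) = subdivLap ψ v := by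
  let g : SubV G ⊕ SubH G → ℤ := Sum.elim 0 fun p =>
    if pt p.1.1 p.1.2 = v then ψ v - ψ (pt p.1.1 (p.1.2 + 1)) else 0
  unfold intLap
  refine (Fintype.sum_equiv (ι := (Subdiv G).X) (κ := SubV G ⊕ SubH G) (Equiv.refl _) _ g
    ?_).trans ?_
  · rintro (u | p)
    · exact if_neg fun h => h.1 rfl
    have hcond : (Subdiv G).r (.inr p) = (subdivVertEquiv G v).val ↔ pt p.1.1 p.1.2 = v := by
      change subR G (.inr p) = .inl v ↔ _
      rw [subR_inr, Sum.inl.injEq]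
    have hroot : (Subdiv G).rv (.inr p) = subdivVertEquiv G (pt p.1.1 p.1.2) :=
      Subtype.ext (subR_inr p)
    have hroot' :
        (Subdiv G).rv ((Subdiv G).i (.inr p)) = subdivVertEquiv G (pt p.1.1 (p.1.2 + 1)) :=
      Subtype.ext (subR_subI_inr p)
    change (if _ ∧ _ then _ else 0) = if pt p.1.1 p.1.2 = v then _ else 0
    refine if_ctx_congr (and_iff_right (subI_ne G p) |>.trans hcond) (fun h => ?_) fun _ => rfl
    simp only [intSlope, Function.comp_apply, hroot, hroot', Equiv.symm_apply_apply, h]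
    exact Int.ediv_one _
  · rw [Fintype.sum_sum_type]
    simp [g, subdivLap]

lemma subdivLap_inl (ψ : SubV G → ℤ) (v : G.V) :
    subdivLap ψ (.inl v) =
      ∑ x, if G.IsHalfEdge x ∧ G.rv x = v then ψ (.inl v) - ψ (pt x 1) else 0 := by
  rw [subdivLap, ← Finset.sum_filter, ← Finset.sum_filter]
  have hmem : ∀ p : SubH G, pt p.1.1 p.1.2 = .inl v ↔ p.1.2 = 0 ∧ G.rv p.1.1 = v :=
    fun p => pt_eq_inl_iff p.2.1 p.2.2
  refine Finset.sum_bij' (fun p _ => p.1.1)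
    (fun x hx => ⟨(x, 0), (Finset.mem_filter.mp hx).2.1, (Finset.mem_filter.mp hx).2.1.l_pos⟩)
    (fun p hp => ?_) (fun x hx => ?_) (fun p hp => ?_) (fun x hx => rfl) (fun p hp => ?_)
  · rw [Finset.mem_filter, hmem] at hp
    exact Finset.mem_filter.mpr ⟨Finset.mem_univ _, p.2.1, hp.2.2⟩
  · exact Finset.mem_filter.mpr
      ⟨Finset.mem_univ _, (hmem _).mpr ⟨rfl, (Finset.mem_filter.mp hx).2.2⟩⟩
  · exact Subtype.ext (Prod.ext rfl ((hmem p).mp (Finset.mem_filter.mp hp).2).1.symm)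
  · rw [((hmem p).mp (Finset.mem_filter.mp hp).2).1]

lemma subdivLap_pt (ψ : SubV G → ℤ) {e : G.X} (he : G.IsHalfEdge e) {j : ℕ} (h0 : 0 < j)
    (hl : j < G.l e) :
    subdivLap ψ (pt e j) = 2 * ψ (pt e j) - ψ (pt e (j - 1)) - ψ (pt e (j + 1)) := by
  let p₁ : SubH G := ⟨(e, j), he, hl⟩
  let p₂ : SubH G := ⟨(G.i e, G.l e - j), he.i, by rw [G.l_i]; omega⟩
  have hne : p₁ ≠ p₂ := fun h => he (congrArg (fun p : SubH G => p.1.1) h).symm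
  have hfilter : Finset.univ.filter (fun p : SubH G => pt p.1.1 p.1.2 = pt e j) = {p₁, p₂} := by
    ext p
    simp only [Finset.mem_filter, Finset.mem_univ, true_and, Finset.mem_insert,
      Finset.mem_singleton, pt_eq_pt_iff p.2.1 he p.2.2 h0 hl, Prod.mk.eta]
    exact or_congr ⟨fun h => Subtype.ext h, congrArg Subtype.val⟩
      ⟨fun h => Subtype.ext h, congrArg Subtype.val⟩
  rw [subdivLap, ← Finset.sum_filter, hfilter, Finset.sum_pair hne]
  have hback : pt (G.i e) (G.l e - j + 1) = pt e (j - 1) :=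
    (pt_i he (by omega)).trans (congrArg _ (by omega))
  simp only [p₁, p₂, hback]
  ring

lemma subdivLap_sub (ψ₁ ψ₂ : SubV G → ℤ) (v : SubV G) :
    subdivLap (ψ₁ - ψ₂) v = subdivLap ψ₁ v - subdivLap ψ₂ v := by
  simp only [subdivLap, ← Finset.sum_sub_distrib]
  refine Finset.sum_congr rfl fun p _ => ?_
  split_ifs
  · simp only [Pi.sub_apply]; ring
  · ring

lemma subdivLap_add_const (ψ : SubV G → ℤ) (c : ℤ) (v : SubV G) :
    subdivLap (fun u => ψ u + c) v = subdivLap ψ v := by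
  simp only [subdivLap, add_sub_add_right_eq_sub]

lemma subdivLap_max_le_left {f g : SubV G → ℤ} {v : SubV G} (h : g v ≤ f v) :
    subdivLap (fun u => max (f u) (g u)) v ≤ subdivLap f v :=
  Finset.sum_le_sum fun p _ => by dsimp only; split_ifs <;> omega

lemma subdivLap_max_le_right {f g : SubV G → ℤ} {v : SubV G} (h : f v ≤ g v) :
    subdivLap (fun u => max (f u) (g u)) v ≤ subdivLap g v := by
  simp only [max_comm (f _)]
  exact subdivLap_max_le_left h

lemma subdivLap_max_le {f g : SubV G → ℤ} {v : SubV G} {a : ℤ} (hf : subdivLap f v ≤ a)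
    (hg : subdivLap g v ≤ a) : subdivLap (fun u => max (f u) (g u)) v ≤ a :=
  (le_total (g v) (f v)).elim (fun h => (subdivLap_max_le_left h).trans hf)
    fun h => (subdivLap_max_le_right h).trans hg

variable (G) in
def subdivDivisor (D : G.V → ℤ) : (Subdiv G).V → ℤ :=
  Sum.elim D 0 ∘ (subdivVertEquiv G).symm

lemma degD_subdivDivisor (D : G.V → ℤ) : (Subdiv G).degD (subdivDivisor G D) = G.degD D := by
  simp only [degD, subdivDivisor, Function.comp_apply]
  rw [Equiv.sum_comp (subdivVertEquiv G).symm (Sum.elim D 0), Fintype.sum_sum_type]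
  simp

variable (G) in
def linExt (φ : G.V → ℤ) : SubV G → ℤ
  | .inl v => φ v
  | .inr q => φ (G.rv q.1.1) - q.1.2 * G.intSlope φ q.1.1

lemma linExt_pt {φ : G.V → ℤ} (hφ : G.IsIntPL φ) {e : G.X} (he : G.IsHalfEdge e) {t : ℕ}
    (ht : t ≤ G.l e) : linExt G φ (pt e t) = φ (G.rv e) - t * G.intSlope φ e := by
  have hend := intSlope_mul hφ he
  rcases Nat.eq_zero_or_pos t with rfl | h0
  · simp [pt_zero, linExt]
  rcases ht.lt_or_eq with hl | rfl
  · obtain ⟨q, hq, hq' | hq'⟩ := pt_eq_inr he h0 hl <;> simp only [hq, linExt, hq']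
    rw [intSlope_i hφ he, Nat.cast_sub hl.le]
    linear_combination hend
  · simp only [pt_l he, linExt]
    linear_combination hend

lemma linExt_pt_add_one {φ : G.V → ℤ} (hφ : G.IsIntPL φ) {e : G.X} (he : G.IsHalfEdge e)
    {t : ℕ} (ht : t < G.l e) :
    linExt G φ (pt e (t + 1)) = linExt G φ (pt e t) - G.intSlope φ e := by
  rw [linExt_pt hφ he ht, linExt_pt hφ he ht.le]
  push_cast; ring

lemma subdivLap_linExt_inl {φ : G.V → ℤ} (hφ : G.IsIntPL φ) (v : G.V) :
    subdivLap (linExt G φ) (.inl v) = G.intLap φ v := by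
  rw [subdivLap_inl, intLap_apply]
  refine Finset.sum_congr rfl fun x _ => if_ctx_congr Iff.rfl (fun hx => ?_) fun _ => rfl
  rw [linExt_pt hφ hx.1 hx.1.l_pos, ← hx.2]
  simp [linExt]

lemma subdivLap_linExt_inr {φ : G.V → ℤ} (hφ : G.IsIntPL φ) (q : IntVert G) :
    subdivLap (linExt G φ) (.inr q) = 0 := by
  obtain ⟨he, h0, hl, -⟩ := q.2
  rw [inr_eq_pt, subdivLap_pt _ he h0 hl]
  obtain ⟨k, hk⟩ : ∃ k, q.1.2 = k + 1 := ⟨q.1.2 - 1, by omega⟩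
  rw [hk] at hl ⊢
  rw [Nat.add_sub_cancel, linExt_pt_add_one hφ he hl, linExt_pt_add_one hφ he (by omega)]
  ring

def tentFun (L m t : ℤ) : ℤ := min (min t m) (L - t)

variable (G) in
/-- A trapezoid on the subdivided edge `{e, i e}`, vanishing off its interior, with slope `1`
at both ends and kinks at `j` and `l e - j`. -/
def tent (e : G.X) (j : ℕ) : SubV G → ℤ
  | .inl _ => 0
  | .inr q => if q.1.1 = e ∨ q.1.1 = G.i e then tentFun (G.l e) (min j (G.l e - j)) q.1.2 else 0

lemma tent_pt {e : G.X} (he : G.IsHalfEdge e) {j t : ℕ} (hj : j ≤ G.l e) (ht : t ≤ G.l e) :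
    tent G e j (pt e t) = tentFun (G.l e) (min j (G.l e - j)) t := by
  rcases Nat.eq_zero_or_pos t with rfl | h0
  · simp only [pt_zero, tent, tentFun]; omega
  rcases ht.lt_or_eq with hl | rfl
  · obtain ⟨q, hq, hq' | hq'⟩ := pt_eq_inr he h0 hl <;> simp only [hq, tent, hq', true_or,
      or_true, if_true]
    simp only [tentFun]; omega
  · simp only [pt_l he, tent, tentFun]; omega

lemma tent_pt_of_ne {e x : G.X} (hxe : x ≠ e) (hxe' : x ≠ G.i e) (j t : ℕ) :
    tent G e j (pt x t) = 0 := by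
  by_cases hx : G.IsHalfEdge x ∧ 0 < t ∧ t < G.l x
  · obtain ⟨q, hq, hq' | hq'⟩ := pt_eq_inr hx.1 hx.2.1 hx.2.2 <;> simp only [hq, tent, hq']
    · simp [hxe, hxe']
    · simp [i_eq_iff, G.i_invol, hxe, hxe']
  · simp only [pt, dif_neg hx]
    split_ifs <;> rfl

lemma subdivLap_tent_inl {e : G.X} (he : G.IsHalfEdge e) {j : ℕ} (h0 : 0 < j) (hl : j < G.l e)
    (v : G.V) :
    subdivLap (tent G e j) (.inl v) =
      -((if G.rv e = v then 1 else 0) + if G.rv (G.i e) = v then 1 else 0) := by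
  have hee : e ≠ G.i e := fun h => he h.symm
  have hend : ∀ x, G.IsHalfEdge x → tent G e j (pt x 1) =
      (if x = e then 1 else 0) + if x = G.i e then 1 else 0 := by
    intro x hx
    by_cases hxe : x = e
    · subst hxe; rw [tent_pt he hl.le (by omega), if_pos rfl, if_neg hee, tentFun]; omega
    by_cases hxe' : x = G.i e
    · subst hxe'
      rw [pt_i he (by omega), tent_pt he hl.le (by omega), if_neg hee.symm, if_pos rfl, tentFun]
      omega
    · rw [tent_pt_of_ne hxe hxe', if_neg hxe, if_neg hxe']; rfl
  rw [subdivLap_inl]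
  have hsummand : ∀ x, (if G.IsHalfEdge x ∧ G.rv x = v then
      tent G e j (.inl v) - tent G e j (pt x 1) else 0) =
      -((if x = e then if G.rv e = v then 1 else 0 else 0) +
        if x = G.i e then if G.rv (G.i e) = v then 1 else 0 else 0) := by
    intro x
    by_cases hx : G.IsHalfEdge x ∧ G.rv x = v
    · rw [if_pos hx, hend x hx.1]
      obtain ⟨-, rfl⟩ := hx
      split_ifs <;> simp_all [tent]
    · rw [if_neg hx]
      split_ifs <;> simp_all [he.i]
  simp only [hsummand, Finset.sum_neg_distrib, Finset.sum_add_distrib, Finset.sum_ite_eq',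
    Finset.mem_univ, if_true]

lemma single_le_subdivLap_tent_pt {e : G.X} (he : G.IsHalfEdge e) {j k : ℕ} (hj0 : 0 < j)
    (hjl : j < G.l e) (hk0 : 0 < k) (hkl : k < G.l e) :
    (Pi.single (pt e j) 1 : SubV G → ℤ) (pt e k) ≤ subdivLap (tent G e j) (pt e k) := by
  have hkj : pt e k = pt e j ↔ k = j := by
    rw [pt_eq_pt_iff he he hkl hj0 hjl]
    have : e ≠ G.i e := fun h => he h.symm
    simp [this]
  rw [subdivLap_pt _ he hk0 hkl, tent_pt he hjl.le (by omega), tent_pt he hjl.le (by omega),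
    tent_pt he hjl.le (by omega), Pi.single_apply, tentFun, tentFun, tentFun]
  split_ifs with h <;> [rw [hkj] at h; skip] <;> omega

lemma single_le_subdivLap_tent {e : G.X} (he : G.IsHalfEdge e) {j : ℕ} (hj0 : 0 < j)
    (hjl : j < G.l e) (q : IntVert G) :
    (Pi.single (pt e j) 1 : SubV G → ℤ) (.inr q) ≤ subdivLap (tent G e j) (.inr q) := by
  obtain ⟨hx, hk0, hkl, -⟩ := q.2
  rw [inr_eq_pt]
  by_cases hxe : q.1.1 = e
  · rw [hxe] at hkl ⊢
    exact single_le_subdivLap_tent_pt he hj0 hjl hk0 hkl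
  by_cases hxe' : q.1.1 = G.i e
  · rw [hxe', G.l_i] at hkl
    rw [hxe', pt_i he hkl.le]
    exact single_le_subdivLap_tent_pt he hj0 hjl (by omega) (by omega)
  rw [subdivLap_pt _ hx hk0 hkl, tent_pt_of_ne hxe hxe', tent_pt_of_ne hxe hxe',
    tent_pt_of_ne hxe hxe', Pi.single_apply, if_neg]
  · rfl
  rw [pt_eq_pt_iff hx he hkl hj0 hjl]
  rintro (h | h) <;> simp_all [Prod.ext_iff]

lemma subdivLap_linExt_add_const_inl {φ : G.V → ℤ} (hφ : G.IsIntPL φ) (c : ℤ) (v : G.V) :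
    subdivLap (fun u => linExt G φ u + c) (.inl v) = G.intLap φ v := by
  rw [subdivLap_add_const, subdivLap_linExt_inl hφ]

lemma subdivLap_max_linExt_inr_nonpos {φ₁ φ₂ : G.V → ℤ} (hφ₁ : G.IsIntPL φ₁)
    (hφ₂ : G.IsIntPL φ₂) (c : ℤ) (q : IntVert G) :
    subdivLap (fun u => max (linExt G φ₁ u) (linExt G φ₂ u + c)) (.inr q) ≤ 0 :=
  subdivLap_max_le (subdivLap_linExt_inr hφ₁ q).le
    ((subdivLap_add_const _ c _).trans (subdivLap_linExt_inr hφ₂ q)).le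

lemma single_pt_apply_inl {e : G.X} (he : G.IsHalfEdge e) {j : ℕ} (h0 : 0 < j) (hl : j < G.l e)
    (v : G.V) : (Pi.single (pt e j) 1 : SubV G → ℤ) (.inl v) = 0 :=
  Pi.single_eq_of_ne (fun h => h0.ne' ((pt_eq_inl_iff he hl).mp h.symm).1) 1

lemma subdivLap_linExt_le {φ : G.V → ℤ} (hφ : G.IsIntPL φ) {v : G.V}
    (hD : G.intLap φ ≤ D - Pi.single v 1) :
    subdivLap (linExt G φ) ≤ Sum.elim D 0 - Pi.single (.inl v) 1 := by
  rintro (u | q)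
  · rw [subdivLap_linExt_inl hφ]
    simpa [Pi.single_apply] using hD u
  · simp [subdivLap_linExt_inr hφ]

lemma exists_subdivLap_le_pt_of_intSlope_ne {φ₁ φ₂ : G.V → ℤ} (hφ₁ : G.IsIntPL φ₁)
    (hφ₂ : G.IsIntPL φ₂) (h₁ : G.intLap φ₁ ≤ D) (h₂ : G.intLap φ₂ ≤ D) {e : G.X}
    (he : G.IsHalfEdge e) (hs : G.intSlope φ₁ e ≠ G.intSlope φ₂ e) {j : ℕ} (h0 : 0 < j)
    (hl : j < G.l e) : ∃ ψ, subdivLap ψ ≤ Sum.elim D 0 - Pi.single (pt e j) 1 := by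
  set c := linExt G φ₁ (pt e j) - linExt G φ₂ (pt e j) with hc
  refine ⟨fun u => max (linExt G φ₁ u) (linExt G φ₂ u + c), ?_⟩
  rintro (v | q)
  · simp only [Pi.sub_apply, Sum.elim_inl, single_pt_apply_inl he h0 hl, sub_zero]
    exact subdivLap_max_le ((subdivLap_linExt_inl hφ₁ v).trans_le (h₁ v))
      ((subdivLap_linExt_add_const_inl hφ₂ c v).trans_le (h₂ v))
  by_cases hq : .inr q = pt e j
  · simp only [Pi.sub_apply, Sum.elim_inr, Pi.zero_apply]
    rw [hq, Pi.single_eq_same, subdivLap_pt _ he h0 hl]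
    obtain ⟨k, rfl⟩ : ∃ k, j = k + 1 := ⟨j - 1, by omega⟩
    have a₁ := linExt_pt_add_one hφ₁ he (t := k) (by omega)
    have a₂ := linExt_pt_add_one hφ₂ he (t := k) (by omega)
    have b₁ := linExt_pt_add_one hφ₁ he hl
    have b₂ := linExt_pt_add_one hφ₂ he hl
    rw [Nat.add_sub_cancel]
    omega
  · simp only [Pi.sub_apply, Sum.elim_inr, Pi.zero_apply, Pi.single_eq_of_ne hq, sub_zero]
    exact subdivLap_max_linExt_inr_nonpos hφ₁ hφ₂ c q

lemma exists_subdivLap_le_pt_of_intSlope_eq {φ₁ φ₂ : G.V → ℤ} (hφ₁ : G.IsIntPL φ₁)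
    (hφ₂ : G.IsIntPL φ₂) {e : G.X} (he : G.IsHalfEdge e) (hloop : G.rv e ≠ G.rv (G.i e))
    (h₁ : G.intLap φ₁ ≤ D - Pi.single (G.rv e) 1)
    (h₂ : G.intLap φ₂ ≤ D - Pi.single (G.rv (G.i e)) 1)
    (hs : G.intSlope φ₁ e = G.intSlope φ₂ e) {j : ℕ} (h0 : 0 < j) (hl : j < G.l e) :
    ∃ ψ, subdivLap ψ ≤ Sum.elim D 0 - Pi.single (pt e j) 1 := by
  set c := φ₁ (G.rv e) - φ₂ (G.rv e)
  have hagree : ∀ t ≤ G.l e, linExt G φ₂ (pt e t) + c = linExt G φ₁ (pt e t) := by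
    intro t ht
    rw [linExt_pt hφ₁ he ht, linExt_pt hφ₂ he ht, hs]; ring
  have hu := hagree 0 (Nat.zero_le _)
  have hu' := hagree (G.l e) le_rfl
  rw [pt_zero] at hu
  rw [pt_l he] at hu'
  refine ⟨(fun u => max (linExt G φ₁ u) (linExt G φ₂ u + c)) - tent G e j, ?_⟩
  rintro (v | q)
  · simp only [Pi.sub_apply, Sum.elim_inl, single_pt_apply_inl he h0 hl, sub_zero]
    rw [subdivLap_sub, subdivLap_tent_inl he h0 hl]
    have h₁v := h₁ v
    have h₂v := h₂ v
    simp only [Pi.sub_apply, Pi.single_apply] at h₁v h₂v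
    by_cases hv : G.rv e = v
    · subst hv
      have := subdivLap_max_le_left (f := linExt G φ₁) (g := fun u => linExt G φ₂ u + c) hu.le
      rw [subdivLap_linExt_inl hφ₁] at this
      simp only [if_pos, if_neg hloop.symm] at h₁v ⊢
      omega
    by_cases hv' : G.rv (G.i e) = v
    · subst hv'
      have := subdivLap_max_le_right (f := linExt G φ₁) (g := fun u => linExt G φ₂ u + c)
        hu'.ge
      rw [subdivLap_linExt_add_const_inl hφ₂] at this
      simp only [if_pos, if_neg hloop] at h₂v ⊢
      omega
    have := subdivLap_max_le (a := D v) ((subdivLap_linExt_inl hφ₁ v).trans_le (by omega))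
      ((subdivLap_linExt_add_const_inl hφ₂ c v).trans_le (by omega))
    simp only [if_neg hv, if_neg hv']
    omega
  · have := single_le_subdivLap_tent he h0 hl q
    have := subdivLap_max_linExt_inr_nonpos hφ₁ hφ₂ c q
    simp only [Pi.sub_apply, Sum.elim_inr, Pi.zero_apply, subdivLap_sub] at *
    omega

lemma exists_subdivLap_le (hloopless : ∀ x, G.IsHalfEdge x → G.r x ≠ G.r (G.i x))
    (hD : ∀ w, ∃ φ, G.IsIntPL φ ∧ G.intLap φ ≤ D - Pi.single w 1) (w : SubV G) :
    ∃ ψ, subdivLap ψ ≤ Sum.elim D 0 - Pi.single w 1 := by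
  rcases w with v | q
  · obtain ⟨φ, hφ, h⟩ := hD v
    exact ⟨_, subdivLap_linExt_le hφ h⟩
  obtain ⟨he, h0, hl, -⟩ := q.2
  rw [inr_eq_pt]
  obtain ⟨φ₁, hφ₁, h₁⟩ := hD (G.rv q.1.1)
  obtain ⟨φ₂, hφ₂, h₂⟩ := hD (G.rv (G.i q.1.1))
  by_cases hs : G.intSlope φ₁ q.1.1 = G.intSlope φ₂ q.1.1
  · exact exists_subdivLap_le_pt_of_intSlope_eq hφ₁ hφ₂ he
      (fun h => hloopless _ he (congrArg Subtype.val h)) h₁ h₂ hs h0 hl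
  · exact exists_subdivLap_le_pt_of_intSlope_ne hφ₁ hφ₂ (h₁.trans (sub_single_le _))
      (h₂.trans (sub_single_le _)) he hs h0 hl

lemma isIntPL_subdiv (φ : (Subdiv G).V → ℤ) : (Subdiv G).IsIntPL φ := by
  rintro (u | p) hx
  · exact absurd rfl hx
  · exact (Int.natCast_dvd.mpr (one_dvd _) : ((1 : ℕ) : ℤ) ∣ _)

instance [Nonempty G.V] : Nonempty (Subdiv G).V :=
  ⟨subdivVertEquiv G (.inl (Classical.arbitrary _))⟩

theorem one_le_rank_subdivDivisor [Nonempty G.V]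
    (hloopless : ∀ x, G.IsHalfEdge x → G.r x ≠ G.r (G.i x)) (hD : 1 ≤ G.rank D) :
    1 ≤ (Subdiv G).rank (subdivDivisor G D) := by
  rw [one_le_rank_iff] at hD ⊢
  intro z
  obtain ⟨ψ, hψ⟩ := exists_subdivLap_le hloopless hD ((subdivVertEquiv G).symm z)
  refine ⟨ψ ∘ (subdivVertEquiv G).symm, isIntPL_subdiv _, fun z' => ?_⟩
  obtain ⟨u, rfl⟩ := (subdivVertEquiv G).surjective z'
  rw [intLap_subdiv]
  simpa [subdivDivisor, Pi.single_apply, ← Equiv.eq_symm_apply] using hψ u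

end

end MGraph

/-- **Lemma 4.13.** Let `Γ` be an `ℕ`-metrised graph without loops, and let `G` be the
underlying graph. Let `H` be the graph obtained from `G` by subdividing every edge
`{e, i e}` exactly `l e - 1` times, regarded as an `ℕ`-metrised graph in which every edge
has length `1`. Then `dgon(Γ) ≥ dgon(H)`. -/
theorem MGraph.dgon_subdiv_le (G : MGraph ℕ) (hconn : G.IsConnected)
    (hloopless : ∀ x, G.IsHalfEdge x → G.r x ≠ G.r (G.i x)) :
    (MGraph.Subdiv G).dgon ≤ G.dgon := by
  obtain ⟨x⟩ := hconn.1
  have : Nonempty G.V := ⟨G.rv x⟩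
  refine csInf_le_csInf MGraph.bddBelow_gonSet MGraph.gonSet_nonempty ?_
  rintro _ ⟨D, hD, rfl⟩
  exact ⟨_, MGraph.one_le_rank_subdivDivisor hloopless hD, MGraph.degD_subdivDivisor D⟩

end
end
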